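/- For all ordinals α, β with β > 0: α ≪ α # β. -/

import Mathlib

open Ordinal Set
namespace Ordinal
universe u
/-- Natural (Hessenberg) addition of ordinals, as in the older Mathlib. -/
noncomputable def nadd (a b : Ordinal.{u}) : Ordinal.{u} :=
  max (⨆ x : Set.Iio a, Order.succ (nadd x.1 b)) (⨆ x : Set.Iio b, Order.succ (nadd a x.1))
termination_by (a, b)
decreasing_by
  · exact Prod.Lex.left _ _ x.2
  · exact Prod.Lex.right _ x.2
end Ordinal
infixl:65 " ♯ " => Ordinal.nadd

noncomputable section

/-- A cardinal is weakly inaccessible: uncountable, regular, and a limit cardinal. -/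
def WeaklyInaccessible (c : Cardinal) : Prop :=
  Cardinal.aleph0 < c ∧ c.IsRegular ∧ ∀ x < c, Order.succ x < c

/-- `I` is (the initial ordinal of) the least weakly inaccessible cardinal. -/
def I : Ordinal := (sInf {c : Cardinal | WeaklyInaccessible c}).ord

/-- `Om α` is `Ω_α`: `0` for `α = 0` and the initial ordinal of `ℵ_α` otherwise. -/
def Om (α : Ordinal) : Ordinal := if α = 0 then 0 else (Cardinal.aleph α).ord

/-- `R = {Ω_{μ+1} : μ < I} ∪ {I}`. -/
def R : Set Ordinal := {o | (∃ μ < I, o = Om (μ + 1)) ∨ o = I}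

/-- Given the family of hulls at earlier stages, the collapse `ψ_σ`. -/
def psiOf (F : Set Ordinal → Set Ordinal) (σ : Ordinal) : Ordinal :=
  sInf ({β | β < σ ∧ σ ∈ F (Set.Iio β) ∧ F (Set.Iio β) ∩ Set.Iio σ ⊆ Set.Iio β} ∪ {σ})

instance : WellFoundedRelation Ordinal := ⟨(· < ·), Ordinal.lt_wf⟩

/-- `H α X` is the least set of ordinals containing `X ∪ {0, I}` and closed under
ordinal addition, `β ↦ ω^β`, `β ↦ Ω_β`, and `(σ, β) ↦ ψ_σ β` for `σ ∈ R` and `β < α`. -/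
def H (α : Ordinal) (X : Set Ordinal) : Set Ordinal :=
  ⋂₀ {Y : Set Ordinal | X ∪ {0, I} ⊆ Y ∧
      (∀ γ ∈ Y, ∀ δ ∈ Y, γ + δ ∈ Y) ∧
      (∀ γ ∈ Y, Ordinal.omega0 ^ γ ∈ Y) ∧
      (∀ γ ∈ Y, Om γ ∈ Y) ∧
      (∀ σ ∈ R, ∀ β ∈ Y, β < α → σ ∈ Y → psiOf (H β) σ ∈ Y)}
termination_by α
decreasing_by assumption

/-- The collapsing function `ψ_σ α`. -/
def psi (σ α : Ordinal) : Ordinal := psiOf (H α) σ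

/-- The relation `δ₀ ≪ δ₁ {η}`. -/
def llr (η δ₀ δ₁ : Ordinal) : Prop :=
  δ₀ < δ₁ ∧ ∀ σ ∈ R, ∀ α : Ordinal,
    δ₁ ∈ H α (Set.Iio (psi σ α)) → η ∈ H α (Set.Iio (psi σ α)) → δ₀ ∈ H α (Set.Iio (psi σ α))

/-!
Read an ordinal through its Cantor normal form, i.e. as the multiset of exponents `e` of the
powers `ω ^ e` it is made of. Natural addition adds these multisets, while ordinary addition can
only lose terms. Every generator of a hull `H α X` other than a sum is additively principal (this
includes each `ψ_σ β`, since `σ ∈ R` is), and its only natural summands are `0` and itself. So by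
induction over the closure, every natural summand `γ` of an element of `H α X` (for downward
closed `X`) is in `H α X`: each power `ω ^ e` of `γ` is a natural summand of an earlier element,
and `γ` is the sum of these powers. Applied to `α ♯ β` and `X = Iio (ψ_σ α')`, this gives
`α ≪ α ♯ β`.
-/

namespace Ordinal

theorem nadd_eq (a b : Ordinal) : a ♯ b =
    max (⨆ x : Iio a, Order.succ (x.1 ♯ b)) (⨆ x : Iio b, Order.succ (a ♯ x.1)) := by
  rw [nadd]

theorem nadd_lt_nadd_right {a b : Ordinal} (h : a < b) (c : Ordinal) : a ♯ c < b ♯ c := by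
  rw [nadd_eq b c]
  exact (Order.lt_succ _).trans_le <| (Ordinal.le_iSup (fun x : Iio b ↦ Order.succ (x.1 ♯ c))
    ⟨a, h⟩).trans (le_max_left _ _)

theorem nadd_lt_nadd_left {b c : Ordinal} (h : b < c) (a : Ordinal) : a ♯ b < a ♯ c := by
  rw [nadd_eq a c]
  exact (Order.lt_succ _).trans_le <| (Ordinal.le_iSup (fun x : Iio c ↦ Order.succ (a ♯ x.1))
    ⟨b, h⟩).trans (le_max_right _ _)

theorem nadd_le_nadd_right {a b : Ordinal} (h : a ≤ b) (c : Ordinal) : a ♯ c ≤ b ♯ c :=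
  h.eq_or_lt.elim (fun h ↦ h ▸ le_rfl) fun h ↦ (nadd_lt_nadd_right h c).le

theorem nadd_le_nadd_left {b c : Ordinal} (h : b ≤ c) (a : Ordinal) : a ♯ b ≤ a ♯ c :=
  h.eq_or_lt.elim (fun h ↦ h ▸ le_rfl) fun h ↦ (nadd_lt_nadd_left h a).le

theorem nadd_le_iff {a b c : Ordinal} :
    a ♯ b ≤ c ↔ (∀ a' < a, a' ♯ b < c) ∧ ∀ b' < b, a ♯ b' < c := by
  refine ⟨fun h ↦ ⟨fun a' ha ↦ (nadd_lt_nadd_right ha b).trans_le h,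
    fun b' hb ↦ (nadd_lt_nadd_left hb a).trans_le h⟩, fun ⟨ha, hb⟩ ↦ ?_⟩
  rw [nadd_eq]
  exact max_le (ciSup_le' fun x ↦ Order.succ_le_of_lt (ha x.1 x.2))
    (ciSup_le' fun x ↦ Order.succ_le_of_lt (hb x.1 x.2))

theorem lt_nadd_iff {a b c : Ordinal} :
    a < b ♯ c ↔ (∃ b' < b, a ≤ b' ♯ c) ∨ ∃ c' < c, a ≤ b ♯ c' := by
  rw [← not_le, nadd_le_iff]
  simp only [not_and_or, not_forall, not_lt, exists_prop]

theorem le_self_nadd (a b : Ordinal) : a ≤ a ♯ b := by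
  induction a using WellFoundedLT.induction with
  | _ a IH => exact le_of_forall_lt fun c hc ↦ (IH c hc).trans_lt (nadd_lt_nadd_right hc b)

theorem add_le_nadd (a b : Ordinal) : a + b ≤ a ♯ b := by
  induction b using WellFoundedLT.induction with
  | _ b IH =>
  refine le_of_forall_lt fun x hx ↦ ?_
  rcases lt_or_ge x a with hxa | hax
  · exact hxa.trans_le (le_self_nadd a b)
  obtain ⟨b', rfl⟩ : ∃ b', x = a + b' := ⟨x - a, (Ordinal.add_sub_cancel_of_le hax).symm⟩
  have hb' : b' < b := (add_lt_add_iff_left a).1 hx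
  exact (IH b' hb').trans_lt (nadd_lt_nadd_left hb' a)

theorem nadd_comm (a b : Ordinal) : a ♯ b = b ♯ a := by
  induction a using WellFoundedLT.induction generalizing b with
  | _ a IHa =>
  induction b using WellFoundedLT.induction with
  | _ b IHb =>
  refine le_antisymm (nadd_le_iff.2 ⟨fun a' h ↦ ?_, fun b' h ↦ ?_⟩)
    (nadd_le_iff.2 ⟨fun b' h ↦ ?_, fun a' h ↦ ?_⟩)
  · rw [IHa a' h b]; exact nadd_lt_nadd_left h b
  · rw [IHb b' h]; exact nadd_lt_nadd_right h a
  · rw [← IHb b' h]; exact nadd_lt_nadd_left h a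
  · rw [← IHa a' h b]; exact nadd_lt_nadd_right h b

theorem le_nadd_self (a b : Ordinal) : b ≤ a ♯ b :=
  (le_self_nadd b a).trans_eq (nadd_comm b a)

theorem nadd_zero (a : Ordinal) : a ♯ 0 = a := by
  induction a using WellFoundedLT.induction with
  | _ a IH =>
  refine le_antisymm (nadd_le_iff.2 ⟨fun a' h ↦ ?_, fun b' h ↦ by simp at h⟩)
    (le_self_nadd a 0)
  rwa [IH a' h]

theorem zero_nadd (a : Ordinal) : 0 ♯ a = a := by
  rw [nadd_comm, nadd_zero]

theorem nadd_left_cancel {a b c : Ordinal} (h : a ♯ b = a ♯ c) : b = c :=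
  StrictMono.injective (fun _ _ h ↦ nadd_lt_nadd_left h a) h

theorem nadd_assoc (a b c : Ordinal) : a ♯ b ♯ c = a ♯ (b ♯ c) := by
  induction a using WellFoundedLT.induction generalizing b c with
  | _ a IHa =>
  induction b using WellFoundedLT.induction generalizing c with
  | _ b IHb =>
  induction c using WellFoundedLT.induction with
  | _ c IHc =>
  refine le_antisymm (nadd_le_iff.2 ⟨fun x hx ↦ ?_, fun c' hc ↦ ?_⟩)
    (nadd_le_iff.2 ⟨fun a' ha ↦ ?_, fun y hy ↦ ?_⟩)
  · rcases lt_nadd_iff.1 hx with ⟨a', ha, hle⟩ | ⟨b', hb, hle⟩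
    · calc x ♯ c ≤ a' ♯ b ♯ c := nadd_le_nadd_right hle c
        _ = a' ♯ (b ♯ c) := IHa a' ha b c
        _ < a ♯ (b ♯ c) := nadd_lt_nadd_right ha _
    · calc x ♯ c ≤ a ♯ b' ♯ c := nadd_le_nadd_right hle c
        _ = a ♯ (b' ♯ c) := IHb b' hb c
        _ < a ♯ (b ♯ c) := nadd_lt_nadd_left (nadd_lt_nadd_right hb c) a
  · rw [IHc c' hc]; exact nadd_lt_nadd_left (nadd_lt_nadd_left hc b) a
  · rw [← IHa a' ha b c]; exact nadd_lt_nadd_right (nadd_lt_nadd_right ha b) c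
  · rcases lt_nadd_iff.1 hy with ⟨b', hb, hle⟩ | ⟨c', hc, hle⟩
    · calc a ♯ y ≤ a ♯ (b' ♯ c) := nadd_le_nadd_left hle a
        _ = a ♯ b' ♯ c := (IHb b' hb c).symm
        _ < a ♯ b ♯ c := nadd_lt_nadd_right (nadd_lt_nadd_left hb a) c
    · calc a ♯ y ≤ a ♯ (b ♯ c') := nadd_le_nadd_left hle a
        _ = a ♯ b ♯ c' := (IHc c' hc).symm
        _ < a ♯ b ♯ c := nadd_lt_nadd_left hc _

theorem nadd_left_comm (a b c : Ordinal) : a ♯ (b ♯ c) = b ♯ (a ♯ c) := by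
  rw [← nadd_assoc, nadd_comm a b, nadd_assoc]

theorem nadd_add_one (a b : Ordinal) : a ♯ (b + 1) = a ♯ b + 1 := by
  induction a using WellFoundedLT.induction with
  | _ a IH =>
  refine le_antisymm (nadd_le_iff.2 ⟨fun a' h ↦ ?_, fun b' h ↦ ?_⟩)
    (Order.add_one_le_of_lt (nadd_lt_nadd_left (lt_add_one b) a))
  · rw [IH a' h]
    exact Order.lt_add_one_iff.2 (Order.add_one_le_of_lt (nadd_lt_nadd_right h b))
  · exact Order.lt_add_one_iff.2 (nadd_le_nadd_left (Order.lt_add_one_iff.1 h) a)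

theorem nadd_natCast (a : Ordinal) (n : ℕ) : a ♯ n = a + n := by
  induction n with
  | zero => simp [nadd_zero]
  | succ n ih => rw [Nat.cast_succ, nadd_add_one, ih, add_assoc]


/- The hypothesis `hd` is `nadd_lt_opow` at exponent `d`: the two results are proved by a joint
induction on the exponent. -/
theorem opow_mul_nadd_add_lt {d : Ordinal} (hd : ∀ t < ω ^ d, ∀ s < ω ^ d, t ♯ s < ω ^ d)
    {x' x : Ordinal} (h : x' < x) (n : Ordinal) {s : Ordinal} (hs : s < ω ^ d) :
    ω ^ d * (x' / ω ^ d ♯ n) + (x' % ω ^ d ♯ s) < ω ^ d * (x / ω ^ d ♯ n) + (x % ω ^ d ♯ s) := by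
  have hW : ω ^ d ≠ 0 := opow_ne_zero d omega0_ne_zero
  have hq : x' / ω ^ d ≤ x / ω ^ d :=
    (mul_le_iff_le_div hW).1 ((mul_div_le x' _).trans h.le)
  rcases hq.lt_or_eq with hq | hq
  · calc ω ^ d * (x' / ω ^ d ♯ n) + (x' % ω ^ d ♯ s)
        < ω ^ d * (x' / ω ^ d ♯ n) + ω ^ d := add_lt_add_right (hd _ (mod_lt x' hW) _ hs) _
      _ = ω ^ d * Order.succ (x' / ω ^ d ♯ n) := (mul_succ _ _).symm
      _ ≤ ω ^ d * (x / ω ^ d ♯ n) :=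
          mul_le_mul_right (Order.succ_le_of_lt (nadd_lt_nadd_right hq n)) _
      _ ≤ _ := le_self_add
  · have hr : x' % ω ^ d < x % ω ^ d := by
      rwa [← div_add_mod x' (ω ^ d), ← div_add_mod x (ω ^ d), hq, add_lt_add_iff_left] at h
    rw [hq]
    exact add_lt_add_right (nadd_lt_nadd_right hr s) _

theorem nadd_le_opow_mul_add {d : Ordinal} (hd : ∀ t < ω ^ d, ∀ s < ω ^ d, t ♯ s < ω ^ d)
    (x y : Ordinal) :
    x ♯ y ≤ ω ^ d * (x / ω ^ d ♯ y / ω ^ d) + (x % ω ^ d ♯ y % ω ^ d) := by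
  have hW : ω ^ d ≠ 0 := opow_ne_zero d omega0_ne_zero
  induction x using WellFoundedLT.induction generalizing y with
  | _ x IHx =>
  induction y using WellFoundedLT.induction with
  | _ y IHy =>
  refine nadd_le_iff.2 ⟨fun x' hx ↦ (IHx x' hx y).trans_lt
    (opow_mul_nadd_add_lt hd hx _ (mod_lt y hW)), fun y' hy ↦ (IHy y' hy).trans_lt ?_⟩
  have := opow_mul_nadd_add_lt hd hy (x / ω ^ d) (mod_lt x hW)
  rwa [nadd_comm (y' / _), nadd_comm (y' % _), nadd_comm (y / _), nadd_comm (y % _)] at this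

theorem nadd_lt_opow {e a b : Ordinal} (ha : a < ω ^ e) (hb : b < ω ^ e) : a ♯ b < ω ^ e := by
  induction e using WellFoundedLT.induction generalizing a b with
  | _ e IH =>
  rcases eq_or_ne a 0 with rfl | ha0
  · rwa [zero_nadd]
  rcases eq_or_ne b 0 with rfl | hb0
  · rwa [nadd_zero]
  set d := max (log ω a) (log ω b)
  have hde : d < e := max_lt ((lt_opow_iff_log_lt one_lt_omega0 ha0).1 ha)
    ((lt_opow_iff_log_lt one_lt_omega0 hb0).1 hb)
  have hW : ω ^ d ≠ 0 := opow_ne_zero d omega0_ne_zero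
  have hq : ∀ x, log ω x ≤ d → x / ω ^ d < ω := fun x hx ↦ (lt_mul_iff_div_lt hW).1 <| by
    rw [← opow_succ]
    exact (lt_opow_succ_log_self one_lt_omega0 x).trans_le
      (opow_le_opow_right omega0_pos (Order.succ_le_succ hx))
  obtain ⟨m, hm⟩ := lt_omega0.1 (hq a (le_max_left _ _))
  obtain ⟨n, hn⟩ := lt_omega0.1 (hq b (le_max_right _ _))
  calc a ♯ b ≤ ω ^ d * (a / ω ^ d ♯ b / ω ^ d) + (a % ω ^ d ♯ b % ω ^ d) :=
        nadd_le_opow_mul_add (fun t ht s hs ↦ IH d hde ht hs) a b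
    _ < ω ^ d * (m + n : ℕ) + ω ^ d := by
        rw [hm, hn, nadd_natCast, ← Nat.cast_add]
        exact add_lt_add_right (IH d hde (mod_lt a hW) (mod_lt b hW)) _
    _ = ω ^ d * (m + n + 1 : ℕ) := by rw [Nat.cast_succ, mul_add_one]
    _ < ω ^ d * ω := mul_lt_mul_of_pos_left (natCast_lt_omega0 _) (opow_pos d omega0_pos)
    _ = ω ^ Order.succ d := (opow_succ ω d).symm
    _ ≤ ω ^ e := opow_le_opow_right omega0_pos (Order.succ_le_of_lt hde)

theorem opow_nadd_of_lt {e s : Ordinal} (hs : s < ω ^ Order.succ e) :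
    ω ^ e ♯ s = ω ^ e + s := by
  have hW : ω ^ e ≠ 0 := opow_ne_zero e omega0_ne_zero
  obtain ⟨n, hn⟩ := lt_omega0.1 ((lt_mul_iff_div_lt hW).1 (by rwa [← opow_succ]) : s / ω ^ e < ω)
  refine le_antisymm ?_ (add_le_nadd _ _)
  calc ω ^ e ♯ s ≤ ω ^ e * (ω ^ e / ω ^ e ♯ s / ω ^ e) + (ω ^ e % ω ^ e ♯ s % ω ^ e) :=
        nadd_le_opow_mul_add (fun t ht s hs ↦ nadd_lt_opow ht hs) _ _
    _ = ω ^ e + s := by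
        rw [div_self hW, mod_self, zero_nadd, hn, nadd_natCast, mul_add, mul_one, add_assoc, ← hn,
          div_add_mod]

theorem IsPrincipal.nadd_lt {p a b : Ordinal} (hp : IsPrincipal (· + ·) p) (ha : a < p)
    (hb : b < p) : a ♯ b < p := by
  obtain rfl | ⟨e, rfl⟩ := isPrincipal_add_iff_zero_or_omega0_opow.1 hp
  · simp at ha
  · exact nadd_lt_opow ha hb

theorem IsPrincipal.eq_zero_or_eq_of_nadd_eq {p a b : Ordinal} (hp : IsPrincipal (· + ·) p)
    (h : a ♯ b = p) : a = 0 ∨ a = p := by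
  rcases (h ▸ le_self_nadd a b : a ≤ p).lt_or_eq with ha | ha
  · have hb : b = p := (h ▸ le_nadd_self a b : b ≤ p).antisymm
      (not_lt.1 fun hb ↦ (hp.nadd_lt ha hb).ne h)
    subst hb
    refine Or.inl (by_contra fun ha0 ↦ ?_)
    exact (nadd_lt_nadd_right (pos_iff_ne_zero.2 ha0) b).ne' (h.trans (zero_nadd b).symm)
  · exact Or.inr ha

theorem opow_log_nadd_sub {δ : Ordinal} (h : δ ≠ 0) : ω ^ log ω δ ♯ (δ - ω ^ log ω δ) = δ := by
  rw [opow_nadd_of_lt ((sub_le_self _ _).trans_lt (lt_opow_succ_log_self one_lt_omega0 δ)),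
    Ordinal.add_sub_cancel_of_le (opow_log_le_self ω h)]

theorem sub_opow_log_lt {δ : Ordinal} (h : δ ≠ 0) : δ - ω ^ log ω δ < δ := by
  conv_rhs => rw [← opow_log_nadd_sub h]
  simpa only [zero_nadd] using nadd_lt_nadd_right (opow_pos _ omega0_pos) (δ - ω ^ log ω δ)


/-- The exponents of the Cantor normal form of `δ` in base `ω`, each repeated as often as its
coefficient. -/
def cnfExps (δ : Ordinal) : Multiset Ordinal :=
  if h : δ = 0 then 0 else
    have : δ - ω ^ log ω δ < δ := sub_opow_log_lt h
    log ω δ ::ₘ cnfExps (δ - ω ^ log ω δ)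
termination_by δ

@[simp]
theorem cnfExps_zero : cnfExps 0 = 0 := by
  rw [cnfExps, dif_pos rfl]

theorem cnfExps_of_ne_zero {δ : Ordinal} (h : δ ≠ 0) :
    cnfExps δ = log ω δ ::ₘ cnfExps (δ - ω ^ log ω δ) := by
  rw [cnfExps, dif_neg h]

instance : LeftCommutative (fun e a : Ordinal ↦ ω ^ e ♯ a) :=
  ⟨fun _ _ _ ↦ nadd_left_comm _ _ _⟩

def nsumOpow (f : Multiset Ordinal) : Ordinal :=
  f.foldr (fun e a ↦ ω ^ e ♯ a) 0

@[simp]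
theorem nsumOpow_zero : nsumOpow 0 = 0 := rfl

@[simp]
theorem nsumOpow_cons (e : Ordinal) (f : Multiset Ordinal) :
    nsumOpow (e ::ₘ f) = ω ^ e ♯ nsumOpow f :=
  Multiset.foldr_cons ..

theorem nsumOpow_add (f g : Multiset Ordinal) : nsumOpow (f + g) = nsumOpow f ♯ nsumOpow g := by
  induction f using Multiset.induction with
  | empty => simp [zero_nadd]
  | cons e f IH => rw [Multiset.cons_add, nsumOpow_cons, nsumOpow_cons, IH, nadd_assoc]

theorem opow_le_nsumOpow {e : Ordinal} {f : Multiset Ordinal} (h : e ∈ f) :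
    ω ^ e ≤ nsumOpow f := by
  obtain ⟨g, rfl⟩ := Multiset.exists_cons_of_mem h
  exact nsumOpow_cons e g ▸ le_self_nadd _ _

theorem nsumOpow_lt_opow {f : Multiset Ordinal} {c : Ordinal} (h : ∀ e ∈ f, e < c) :
    nsumOpow f < ω ^ c := by
  induction f using Multiset.induction with
  | empty => exact opow_pos c omega0_pos
  | cons e f IH =>
    rw [nsumOpow_cons]
    exact nadd_lt_opow ((opow_lt_opow_iff_right one_lt_omega0).2 (h e (f.mem_cons_self e)))
      (IH fun x hx ↦ h x (Multiset.mem_cons_of_mem hx))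

theorem nsumOpow_cnfExps (δ : Ordinal) : nsumOpow (cnfExps δ) = δ := by
  induction δ using WellFoundedLT.induction with
  | _ δ IH =>
  rcases eq_or_ne δ 0 with rfl | h
  · simp
  · rw [cnfExps_of_ne_zero h, nsumOpow_cons, IH _ (sub_opow_log_lt h), opow_log_nadd_sub h]

theorem log_nsumOpow_mem {f : Multiset Ordinal} (h : nsumOpow f ≠ 0) :
    log ω (nsumOpow f) ∈ f := by
  by_contra hl
  refine (opow_log_le_self ω h).not_gt (nsumOpow_lt_opow fun e he ↦ ?_)
  have : e ≤ log ω (nsumOpow f) := (opow_le_iff_le_log one_lt_omega0 h).1 (opow_le_nsumOpow he)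
  exact this.lt_of_ne fun hel ↦ hl (hel ▸ he)

theorem cnfExps_nsumOpow (f : Multiset Ordinal) : cnfExps (nsumOpow f) = f := by
  suffices ∀ δ f, nsumOpow f = δ → cnfExps δ = f from this _ f rfl
  intro δ
  induction δ using WellFoundedLT.induction with
  | _ δ IH =>
  intro f hf
  rcases eq_or_ne δ 0 with rfl | h
  · rw [cnfExps_zero, eq_comm]
    exact Multiset.eq_zero_of_forall_notMem fun e he ↦
      (opow_pos e omega0_pos).not_ge (hf ▸ opow_le_nsumOpow he)
  obtain ⟨g, rfl⟩ := Multiset.exists_cons_of_mem (hf ▸ log_nsumOpow_mem (hf ▸ h))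
  rw [nsumOpow_cons] at hf
  rw [cnfExps_of_ne_zero h, IH _ (sub_opow_log_lt h) g
    (nadd_left_cancel (hf.trans (opow_log_nadd_sub h).symm))]

theorem cnfExps_nadd (a b : Ordinal) : cnfExps (a ♯ b) = cnfExps a + cnfExps b := by
  conv_lhs => rw [← nsumOpow_cnfExps a, ← nsumOpow_cnfExps b, ← nsumOpow_add, cnfExps_nsumOpow]

theorem exists_opow_nadd_eq_of_mem_cnfExps {e δ : Ordinal} (h : e ∈ cnfExps δ) :
    ∃ b, ω ^ e ♯ b = δ := by
  obtain ⟨g, hg⟩ := Multiset.exists_cons_of_mem h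
  exact ⟨nsumOpow g, by rw [← nsumOpow_cons, ← hg, nsumOpow_cnfExps]⟩

theorem exists_add_nadd_eq_nadd (a b : Ordinal) : ∃ c, (a + b) ♯ c = a ♯ b := by
  induction a using WellFoundedLT.induction with
  | _ a IH =>
  rcases eq_or_ne a 0 with rfl | ha
  · exact ⟨0, by rw [zero_add, nadd_zero, zero_nadd]⟩
  set L := log ω a
  rcases lt_or_ge L (log ω b) with hL | hL
  · have hb : b ≠ 0 := by rintro rfl; simp at hL
    have hab : a < ω ^ log ω b := (lt_opow_succ_log_self one_lt_omega0 a).trans_le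
      (opow_le_opow_right omega0_pos (Order.succ_le_of_lt hL))
    refine ⟨a, ?_⟩
    rw [← Ordinal.add_sub_cancel_of_le (opow_log_le_self ω hb), ← add_assoc, add_omega0_opow hab,
      nadd_comm]
  · obtain ⟨c, hc⟩ := IH _ (sub_opow_log_lt ha)
    have hlt : a - ω ^ L + b < ω ^ Order.succ L := isPrincipal_add_omega0_opow _
      ((sub_le_self _ _).trans_lt (lt_opow_succ_log_self one_lt_omega0 a))
      ((lt_opow_succ_log_self one_lt_omega0 b).trans_le
        (opow_le_opow_right omega0_pos (Order.succ_le_succ hL)))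
    refine ⟨c, ?_⟩
    calc (a + b) ♯ c = ω ^ L ♯ (a - ω ^ L + b) ♯ c := by
          rw [opow_nadd_of_lt hlt, ← add_assoc,
            Ordinal.add_sub_cancel_of_le (opow_log_le_self ω ha)]
      _ = ω ^ L ♯ (a - ω ^ L ♯ b) := by rw [nadd_assoc, hc]
      _ = a ♯ b := by rw [← nadd_assoc, opow_log_nadd_sub ha]

theorem cnfExps_add_le (a b : Ordinal) : cnfExps (a + b) ≤ cnfExps a + cnfExps b := by
  obtain ⟨c, hc⟩ := exists_add_nadd_eq_nadd a b
  rw [← cnfExps_nadd, ← hc, cnfExps_nadd]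
  exact Multiset.le_add_right _ _


theorem mem_of_forall_opow_mem_cnfExps {S : Set Ordinal} (h0 : 0 ∈ S)
    (hadd : ∀ a ∈ S, ∀ b ∈ S, a + b ∈ S) {δ : Ordinal} (h : ∀ e ∈ cnfExps δ, ω ^ e ∈ S) :
    δ ∈ S := by
  induction δ using WellFoundedLT.induction with
  | _ δ IH =>
  rcases eq_or_ne δ 0 with rfl | hδ
  · exact h0
  rw [cnfExps_of_ne_zero hδ] at h
  rw [← Ordinal.add_sub_cancel_of_le (opow_log_le_self ω hδ)]
  exact hadd _ (h _ (Multiset.mem_cons_self _ _)) _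
    (IH _ (sub_opow_log_lt hδ) fun e he ↦ h e (Multiset.mem_cons_of_mem he))

theorem mem_of_nadd_eq_add {S : Set Ordinal} (h0 : 0 ∈ S)
    (hadd : ∀ a ∈ S, ∀ b ∈ S, a + b ∈ S) {x y : Ordinal}
    (hx : ∀ a b, a ♯ b = x → a ∈ S) (hy : ∀ a b, a ♯ b = y → a ∈ S) {a b : Ordinal}
    (h : a ♯ b = x + y) : a ∈ S := by
  have hle : cnfExps a ≤ cnfExps x + cnfExps y :=
    calc cnfExps a ≤ cnfExps a + cnfExps b := Multiset.le_add_right _ _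
      _ = cnfExps (x + y) := by rw [← cnfExps_nadd, h]
      _ ≤ cnfExps x + cnfExps y := cnfExps_add_le x y
  refine mem_of_forall_opow_mem_cnfExps h0 hadd fun e he ↦ ?_
  rcases Multiset.mem_add.1 (Multiset.mem_of_le hle he) with he | he
  · obtain ⟨c, hc⟩ := exists_opow_nadd_eq_of_mem_cnfExps he
    exact hx _ c hc
  · obtain ⟨c, hc⟩ := exists_opow_nadd_eq_of_mem_cnfExps he
    exact hy _ c hc

end Ordinal

def IsHullClosed (α : Ordinal) (X Y : Set Ordinal) : Prop :=
  X ∪ {0, I} ⊆ Y ∧ (∀ γ ∈ Y, ∀ δ ∈ Y, γ + δ ∈ Y) ∧ (∀ γ ∈ Y, ω ^ γ ∈ Y) ∧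
    (∀ γ ∈ Y, Om γ ∈ Y) ∧ (∀ σ ∈ R, ∀ β ∈ Y, β < α → σ ∈ Y → psiOf (H β) σ ∈ Y)

theorem mem_H_iff {α δ : Ordinal} {X : Set Ordinal} :
    δ ∈ H α X ↔ ∀ Y, IsHullClosed α X Y → δ ∈ Y := by
  rw [H]; rfl

theorem H_subset {α : Ordinal} {X Y : Set Ordinal} (hY : IsHullClosed α X Y) : H α X ⊆ Y :=
  fun _ h ↦ mem_H_iff.1 h Y hY

theorem isHullClosed_H (α : Ordinal) (X : Set Ordinal) : IsHullClosed α X (H α X) := by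
  refine ⟨fun x hx ↦ mem_H_iff.2 fun Y hY ↦ hY.1 hx,
    fun γ hγ δ hδ ↦ mem_H_iff.2 fun Y hY ↦ hY.2.1 γ (H_subset hY hγ) δ (H_subset hY hδ),
    fun γ hγ ↦ mem_H_iff.2 fun Y hY ↦ hY.2.2.1 γ (H_subset hY hγ),
    fun γ hγ ↦ mem_H_iff.2 fun Y hY ↦ hY.2.2.2.1 γ (H_subset hY hγ),
    fun σ hσ β hβ hβα hσH ↦ mem_H_iff.2 fun Y hY ↦
      hY.2.2.2.2 σ hσ β (H_subset hY hβ) hβα (H_subset hY hσH)⟩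

theorem isPrincipal_add_Om (γ : Ordinal) : IsPrincipal (· + ·) (Om γ) := by
  unfold Om
  split_ifs
  exacts [isPrincipal_zero, isPrincipal_add_ord (Cardinal.aleph0_le_aleph γ)]

theorem isPrincipal_add_I : IsPrincipal (· + ·) I := by
  rcases Set.eq_empty_or_nonempty {c : Cardinal | WeaklyInaccessible c} with he | hne
  · rw [I, he, Cardinal.sInf_empty, Cardinal.ord_zero]
    exact isPrincipal_zero
  · exact isPrincipal_add_ord (csInf_mem hne).1.le

theorem isPrincipal_add_of_mem_R {σ : Ordinal} (hσ : σ ∈ R) : IsPrincipal (· + ·) σ := by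
  rcases hσ with ⟨μ, -, rfl⟩ | rfl
  exacts [isPrincipal_add_Om _, isPrincipal_add_I]

theorem isPrincipal_add_psiOf {F : Set Ordinal → Set Ordinal} {σ : Ordinal}
    (hσ : IsPrincipal (· + ·) σ) (hF : ∀ X, X ⊆ F X)
    (hFadd : ∀ X, ∀ a ∈ F X, ∀ b ∈ F X, a + b ∈ F X) :
    IsPrincipal (· + ·) (psiOf F σ) := by
  rcases csInf_mem (⟨σ, Or.inr rfl⟩ : ({β | β < σ ∧ σ ∈ F (Iio β) ∧ F (Iio β) ∩ Iio σ ⊆ Iio β} ∪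
    {σ}).Nonempty) with ⟨hψσ, -, hψ⟩ | hψ
  · exact fun a b ha hb ↦ hψ ⟨hFadd _ a (hF _ ha) b (hF _ hb), hσ (ha.trans hψσ) (hb.trans hψσ)⟩
  · rwa [psiOf, Set.mem_singleton_iff.1 hψ]

theorem mem_H_of_nadd_mem {α : Ordinal} {X : Set Ordinal} (hX : IsLowerSet X) {a b : Ordinal}
    (h : a ♯ b ∈ H α X) : a ∈ H α X := by
  obtain ⟨hXH, hadd, hopow, hOm, hpsi⟩ := isHullClosed_H α X
  have h0 : (0 : Ordinal) ∈ H α X := hXH (Or.inr (Or.inl rfl))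
  let Y : Set Ordinal := {δ | δ ∈ H α X ∧ ∀ a b, a ♯ b = δ → a ∈ H α X}
  have hprincipal {p : Ordinal} (hp : IsPrincipal (· + ·) p) (hpH : p ∈ H α X) : p ∈ Y :=
    ⟨hpH, fun a b hab ↦ (hp.eq_zero_or_eq_of_nadd_eq hab).elim
      (fun ha ↦ ha ▸ h0) (fun ha ↦ ha ▸ hpH)⟩
  have hY : IsHullClosed α X Y := by
    refine ⟨?_, fun γ hγ δ hδ ↦ ⟨hadd γ hγ.1 δ hδ.1, ?_⟩, fun γ hγ ↦ ?_, fun γ hγ ↦ ?_,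
      fun σ hσ β hβ hβα hσY ↦ ?_⟩
    · rintro x (hx | rfl | rfl)
      · exact ⟨hXH (Or.inl hx), fun a b hab ↦ hXH (Or.inl (hX (hab ▸ le_self_nadd a b) hx))⟩
      · exact hprincipal isPrincipal_zero h0
      · exact hprincipal isPrincipal_add_I (hXH (Or.inr (Or.inr rfl)))
    · exact fun a b hab ↦ mem_of_nadd_eq_add h0 hadd hγ.2 hδ.2 hab
    · exact hprincipal (isPrincipal_add_omega0_opow γ) (hopow γ hγ.1)
    · exact hprincipal (isPrincipal_add_Om γ) (hOm γ hγ.1)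
    · refine hprincipal (isPrincipal_add_psiOf (isPrincipal_add_of_mem_R hσ) ?_ ?_)
        (hpsi σ hσ β hβ.1 hβα hσY.1)
      · exact fun Z z hz ↦ (isHullClosed_H β Z).1 (Or.inl hz)
      · exact (isHullClosed_H β · |>.2.1)
  exact (H_subset hY h).2 a b rfl

theorem stmt16_general (α β : Ordinal) (hβ : 0 < β) : llr 0 α (α ♯ β) :=
  ⟨by simpa only [nadd_zero] using nadd_lt_nadd_left hβ α,
    fun _ _ _ h _ ↦ mem_H_of_nadd_mem (isLowerSet_Iio _) h⟩

theorem stmt16 (hex : ∃ c : Cardinal, WeaklyInaccessible c)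
    (α β : Ordinal) (hβ : 0 < β) : llr 0 α (α ♯ β) :=
  stmt16_general α β hβ
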